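/- arXiv:1401.4934 — 3 statements merged into one kernel-verified Lean document; each statement's English description precedes it below -/
import Mathlib

section
/- For all integers 1 ≤ k ≤ n, the signed Stirling numbers of the first kind admit the explicit nested-sum representation s(n,k) = (−1)^{n+k} (n−1)! · Σ_{ℓ1=1}^{n−1} (1/ℓ1) Σ_{ℓ2=1}^{ℓ1−1} (1/ℓ2) ⋯ Σ_{ℓ_{k−2}=1}^{ℓ_{k−3}−1} (1/ℓ_{k−2}) Σ_{ℓ_{k−1}=1}^{ℓ_{k−2}−1} (1/ℓ_{k−1}), where the sum is a (k−1)-fold nested sum (interpreted as 1 when k = 1, i.e. the empty nested sum equals 1). -/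
/-- Signed Stirling numbers of the first kind, defined by `s(0,0)=1`,
`s(n,0)=0` for `n ≥ 1`, `s(0,k)=0` for `k ≥ 1`, and
`s(n+1,k+1) = s(n,k) - n·s(n,k+1)`. -/
def stirling1 : ℕ → ℕ → ℤ
  | 0, 0 => 1
  | 0, _ + 1 => 0
  | _ + 1, 0 => 0
  | n + 1, k + 1 => stirling1 n k - (n : ℤ) * stirling1 n (k + 1)

/-- `nestedSum j m` is the `j`-fold nested sum
`Σ_{ℓ1=1}^{m} (1/ℓ1) Σ_{ℓ2=1}^{ℓ1-1} (1/ℓ2) ⋯ Σ_{ℓj=1}^{ℓ_{j-1}-1} (1/ℓj)`,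
with the empty (`j = 0`) nested sum equal to `1`. -/
noncomputable def nestedSum : ℕ → ℕ → ℝ
  | 0, _ => 1
  | j + 1, m => ∑ l ∈ Finset.Icc 1 m, (1 / (l : ℝ)) * nestedSum j (l - 1)
termination_by j _ => j

/-- The quantity `a_{n,k} = (k-1)!(n-1)!` times the `(k-2)`-fold nested sum
`Σ_{ℓ1=1}^{n-1} (1/ℓ1) ⋯ Σ_{ℓ_{k-2}=1}^{ℓ_{k-3}-1} (1/ℓ_{k-2})`; in particular
`a_{n,2} = (n-1)!`. -/
noncomputable def a (n k : ℕ) : ℝ :=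
  (Nat.factorial (k - 1) : ℝ) * (Nat.factorial (n - 1) : ℝ) * nestedSum (k - 2) (n - 1)

/-! Write `n = m + 1`, `k = j + 1`. Splitting off the outermost term `ℓ₁ = m + 1` gives
`nestedSum (j + 1) (m + 1) = nestedSum (j + 1) m + nestedSum j m / (m + 1)`, and after
multiplying by `(-1)^(m+j) (m+1)!` this is exactly the recurrence
`s(m+2, j+2) = s(m+1, j+1) - (m+1) s(m+1, j+2)`; induction on `m` finishes. -/

lemma nestedSum_zero_left (m : ℕ) : nestedSum 0 m = 1 := by
  rw [nestedSum]

lemma nestedSum_succ_zero (j : ℕ) : nestedSum (j + 1) 0 = 0 := by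
  rw [nestedSum]
  simp

lemma nestedSum_succ_succ (j m : ℕ) :
    nestedSum (j + 1) (m + 1) = nestedSum (j + 1) m + 1 / (m + 1 : ℝ) * nestedSum j m := by
  rw [nestedSum, nestedSum, Finset.sum_Icc_succ_top (by omega)]
  simp

lemma stirling1_succ_succ (n k : ℕ) :
    stirling1 (n + 1) (k + 1) = stirling1 n k - n * stirling1 n (k + 1) := by
  rw [stirling1]

lemma stirling1_succ_succ_eq_nestedSum (m j : ℕ) :
    (stirling1 (m + 1) (j + 1) : ℝ) = (-1 : ℝ) ^ (m + j) * m.factorial * nestedSum j m := by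
  induction m generalizing j with
  | zero =>
    rcases j with _ | i
    · simp [stirling1, nestedSum_zero_left]
    · rw [nestedSum_succ_zero]
      simp [stirling1]
  | succ m ih =>
    rw [stirling1_succ_succ, Nat.factorial_succ]
    rcases j with _ | i
    · rw [show stirling1 (m + 1) 0 = 0 from rfl, Int.cast_sub, Int.cast_mul, ih,
        nestedSum_zero_left, nestedSum_zero_left]
      push_cast
      ring
    · rw [Int.cast_sub, Int.cast_mul, ih, ih, nestedSum_succ_succ]
      have hm : (m : ℝ) + 1 ≠ 0 := by positivity
      push_cast
      field_simp
      ring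

/-- For `1 ≤ k ≤ n`, the signed Stirling numbers of the first kind admit the
explicit `(k-1)`-fold nested-sum representation
`s(n,k) = (-1)^{n+k} (n-1)! Σ_{ℓ1=1}^{n-1} (1/ℓ1) ⋯ Σ_{ℓ_{k-1}=1}^{ℓ_{k-2}-1} (1/ℓ_{k-1})`. -/
theorem stirling1_eq_nestedSum (n k : ℕ) (hk : 1 ≤ k) (hkn : k ≤ n) :
    (stirling1 n k : ℝ) =
      (-1 : ℝ) ^ (n + k) * (Nat.factorial (n - 1) : ℝ) * nestedSum (k - 1) (n - 1) := by
  obtain ⟨m, rfl⟩ : ∃ m, n = m + 1 := ⟨n - 1, by omega⟩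
  obtain ⟨j, rfl⟩ : ∃ j, k = j + 1 := ⟨k - 1, by omega⟩
  rw [stirling1_succ_succ_eq_nestedSum, Nat.add_sub_cancel, Nat.add_sub_cancel]
  ring
end

section
/- For all integers 2 ≤ k ≤ n, the signed Stirling numbers of the first kind satisfy the summation recursion (−1)^{n−k} · s(n,k)/(n−1)! = Σ_{m=k−1}^{n−1} (1/m) · (−1)^{m−(k−1)} · s(m,k−1)/(m−1)!. -/
open Finset Nat

theorem stirling1_eq_neg_one_pow_mul_stirlingFirst :
    ∀ n k : ℕ, stirling1 n k = (-1) ^ (n + k) * stirlingFirst n k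
  | 0, 0 => by simp [stirling1]
  | 0, _ + 1 => by simp [stirling1]
  | _ + 1, 0 => by simp [stirling1]
  | n + 1, k + 1 => by
    rw [stirling1, stirling1_eq_neg_one_pow_mul_stirlingFirst n k,
      stirling1_eq_neg_one_pow_mul_stirlingFirst n (k + 1), stirlingFirst_succ_succ]
    push_cast
    ring

theorem neg_one_pow_sub_mul_stirling1 {R : Type*} [Ring R] (n k : ℕ) :
    (-1 : R) ^ (n - k) * stirling1 n k = stirlingFirst n k := by
  rcases lt_or_ge n k with hnk | hkn
  · simp [stirling1_eq_neg_one_pow_mul_stirlingFirst, stirlingFirst_eq_zero_of_lt hnk]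
  · obtain ⟨d, rfl⟩ := Nat.exists_eq_add_of_le hkn
    rw [stirling1_eq_neg_one_pow_mul_stirlingFirst, Nat.add_sub_cancel_left]
    push_cast
    rw [← mul_assoc, ← pow_add, show d + (k + d + k) = 2 * (k + d) by ring, pow_mul]
    simp

theorem stirlingFirst_succ_div_factorial_sub {m : ℕ} (hm : m ≠ 0) (k : ℕ) :
    (stirlingFirst (m + 1) (k + 1) : ℝ) / (m !) - stirlingFirst m (k + 1) / (m - 1)! =
      1 / m * (stirlingFirst m k / (m - 1)!) := by
  obtain ⟨j, rfl⟩ := Nat.exists_eq_succ_of_ne_zero hm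
  rw [stirlingFirst_succ_succ, Nat.succ_sub_one, factorial_succ]
  push_cast
  field_simp
  ring

theorem stirlingFirst_succ_div_factorial_eq_sum {k : ℕ} (hk : k ≠ 0) (n : ℕ) :
    (stirlingFirst (n + 1) (k + 1) : ℝ) / n ! =
      ∑ m ∈ Icc k n, 1 / (m : ℝ) * (stirlingFirst m k / (m - 1)!) := by
  rcases lt_or_ge n k with hnk | hkn
  · simp [stirlingFirst_eq_zero_of_lt (Nat.succ_lt_succ hnk), Icc_eq_empty_of_lt hnk]
  have hsum := sum_Icc_sub hkn fun m ↦ (stirlingFirst m (k + 1) : ℝ) / (m - 1)!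
  simp only [Nat.add_sub_cancel, stirlingFirst_eq_zero_of_lt (Nat.lt_succ_self k), cast_zero,
    zero_div, sub_zero] at hsum
  rw [← hsum]
  exact sum_congr rfl fun m hm ↦
    stirlingFirst_succ_div_factorial_sub (by rw [mem_Icc] at hm; omega) k

/-- For `2 ≤ k ≤ n`, the signed Stirling numbers of the first kind satisfy
`(-1)^{n-k} s(n,k)/(n-1)! = Σ_{m=k-1}^{n-1} (1/m) (-1)^{m-(k-1)} s(m,k-1)/(m-1)!`. -/
theorem stirling1_sum_recursion (n k : ℕ) (h2 : 2 ≤ k) (hkn : k ≤ n) :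
    (-1 : ℝ) ^ (n - k) * (stirling1 n k : ℝ) / (Nat.factorial (n - 1) : ℝ) =
      ∑ m ∈ Finset.Icc (k - 1) (n - 1),
        (1 / (m : ℝ)) *
          ((-1 : ℝ) ^ (m - (k - 1)) * (stirling1 m (k - 1) : ℝ) /
            (Nat.factorial (m - 1) : ℝ)) := by
  obtain ⟨k, rfl⟩ : ∃ k', k = k' + 1 := ⟨k - 1, by omega⟩
  obtain ⟨n, rfl⟩ : ∃ n', n = n' + 1 := ⟨n - 1, by omega⟩
  simp only [Nat.add_sub_cancel, neg_one_pow_sub_mul_stirling1]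
  exact stirlingFirst_succ_div_factorial_eq_sum (by omega) n
end

section
/- For every positive integer n and every real x > 0 with x ≠ 1, the n-th derivative of the function x ↦ 1/ln(x) is given by (1/ln x)^{(n)} = (1/x^n) · Σ_{k=1}^{n} (−1)^k k! · s(n,k) · (1/ln x)^{k+1}, where s(n,k) are the signed Stirling numbers of the first kind. -/
/-!
Writing `L = 1 / log x`, we have `dL/dx = -L² / x`. Hence if the `n`-th derivative is
`x⁻ⁿ P_n(L)` for a polynomial `P_n`, the next one is `x⁻ⁿ⁻¹ (-n P_n(L) - L² P_n'(L))`.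
The recurrence `P_{n+1} = -n P_n - L² P_n'` is solved by
`P_n(L) = Σ_k (-1)^k k! s(n,k) L^(k+1)`, which is exactly the Stirling recurrence.
-/

open Finset Real
open scoped Nat

theorem stirling1_succ_zero (n : ℕ) : stirling1 (n + 1) 0 = 0 := rfl

theorem stirling1_eq_zero_of_lt : ∀ {n k : ℕ}, n < k → stirling1 n k = 0
  | 0, _ + 1, _ => rfl
  | n + 1, k + 1, h => by
    rw [stirling1, stirling1_eq_zero_of_lt (by omega : n < k),
      stirling1_eq_zero_of_lt (by omega : n < k + 1), mul_zero, sub_zero]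

noncomputable def stirlingCoeff (n k : ℕ) : ℝ := (-1) ^ k * k ! * stirling1 n k

noncomputable def stirlingPoly (n : ℕ) (L : ℝ) : ℝ :=
  ∑ k ∈ range (n + 1), stirlingCoeff n k * L ^ (k + 1)

theorem stirlingCoeff_succ_zero (n : ℕ) : stirlingCoeff (n + 1) 0 = -n * stirlingCoeff n 0 := by
  cases n <;> simp [stirlingCoeff, stirling1]

theorem stirlingCoeff_succ_succ (n k : ℕ) :
    stirlingCoeff (n + 1) (k + 1) = -(k + 1) * stirlingCoeff n k - n * stirlingCoeff n (k + 1) := by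
  simp only [stirlingCoeff, stirling1, Nat.factorial_succ]
  push_cast
  ring

theorem stirlingCoeff_of_lt {n k : ℕ} (h : n < k) : stirlingCoeff n k = 0 := by
  simp [stirlingCoeff, stirling1_eq_zero_of_lt h]

theorem hasDerivAt_stirlingPoly (n : ℕ) (L : ℝ) :
    HasDerivAt (stirlingPoly n)
      (∑ k ∈ range (n + 1), stirlingCoeff n k * ((k + 1) * L ^ k)) L := by
  refine HasDerivAt.fun_sum fun k _ => ?_
  simpa using (hasDerivAt_pow (k + 1) L).const_mul (stirlingCoeff n k)

theorem stirlingPoly_succ (n : ℕ) (L : ℝ) :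
    stirlingPoly (n + 1) L = -n * stirlingPoly n L
      - L ^ 2 * ∑ k ∈ range (n + 1), stirlingCoeff n k * ((k + 1) * L ^ k) := by
  have shift : ∑ k ∈ range (n + 1), stirlingCoeff n (k + 1) * L ^ (k + 2)
      = stirlingPoly n L - stirlingCoeff n 0 * L := by
    rw [stirlingPoly, sum_range_succ, stirlingCoeff_of_lt n.lt_succ_self, zero_mul, add_zero,
      sum_range_succ']
    ring
  have derivTerm : ∑ k ∈ range (n + 1), -(k + 1 : ℝ) * (stirlingCoeff n k * L ^ (k + 2))
      = -(L ^ 2 * ∑ k ∈ range (n + 1), stirlingCoeff n k * ((k + 1) * L ^ k)) := by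
    rw [mul_sum, ← sum_neg_distrib]
    exact sum_congr rfl fun k _ => by ring
  rw [stirlingPoly, sum_range_succ', stirlingCoeff_succ_zero]
  simp only [stirlingCoeff_succ_succ, sub_mul, sum_sub_distrib, mul_assoc, ← mul_sum, shift,
    derivTerm]
  ring

theorem hasDerivAt_inv_pow (n : ℕ) {x : ℝ} (hx : x ≠ 0) :
    HasDerivAt (fun y => (y ^ n)⁻¹) (-n * (x ^ (n + 1))⁻¹) x := by
  have h := hasDerivAt_zpow (-n : ℤ) x (Or.inl hx)
  rw [show (-n : ℤ) - 1 = -((n + 1 : ℕ) : ℤ) by push_cast; ring] at h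
  simpa only [zpow_neg, zpow_natCast, Int.cast_neg, Int.cast_natCast] using h

theorem hasDerivAt_inv_log {x : ℝ} (hx : x ≠ 0) (hlog : log x ≠ 0) :
    HasDerivAt (fun y => (log y)⁻¹) (-(x⁻¹ * (log x)⁻¹ ^ 2)) x := by
  simpa [div_eq_mul_inv] using (hasDerivAt_log hx).fun_inv hlog

theorem iteratedDeriv_one_div_log_eq_stirlingPoly (n : ℕ) {x : ℝ} (hx : x ≠ 0)
    (hlog : log x ≠ 0) :
    iteratedDeriv n (fun y => 1 / log y) x = (x ^ n)⁻¹ * stirlingPoly n (log x)⁻¹ := by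
  induction n generalizing x with
  | zero => simp [stirlingPoly, stirlingCoeff, stirling1]
  | succ n ih =>
    have hnear : ∀ᶠ y in nhds x, y ≠ 0 ∧ log y ≠ 0 :=
      (eventually_ne_nhds hx).and ((continuousAt_log hx).eventually_ne hlog)
    have hderiv := (hasDerivAt_inv_pow n hx).fun_mul
      ((hasDerivAt_stirlingPoly n _).comp x (hasDerivAt_inv_log hx hlog))
    rw [iteratedDeriv_succ, (Filter.eventuallyEq_of_mem hnear fun y hy => ih hy.1 hy.2).deriv_eq]
    refine hderiv.deriv.trans ?_
    rw [Function.comp_apply, stirlingPoly_succ, pow_succ]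
    field_simp
    ring

/-- For every positive integer `n` and every real `x > 0` with `x ≠ 1`, the `n`-th
derivative of `x ↦ 1/ln x` is
`(1/ln x)^{(n)} = (1/x^n) Σ_{k=1}^{n} (-1)^k k! s(n,k) (1/ln x)^{k+1}`. -/
theorem iteratedDeriv_one_div_log (n : ℕ) (hn : 1 ≤ n) (x : ℝ) (hx : 0 < x) (hx1 : x ≠ 1) :
    iteratedDeriv n (fun y : ℝ => 1 / Real.log y) x =
      (1 / x ^ n) * ∑ k ∈ Finset.Icc 1 n,
        (-1 : ℝ) ^ k * (Nat.factorial k : ℝ) * (stirling1 n k : ℝ) *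
          (1 / Real.log x) ^ (k + 1) := by
  obtain ⟨m, rfl⟩ := Nat.exists_eq_add_of_le' hn
  rw [iteratedDeriv_one_div_log_eq_stirlingPoly _ hx.ne' (log_ne_zero_of_pos_of_ne_one hx hx1),
    stirlingPoly, range_eq_Ico, sum_eq_sum_Ico_succ_bot (by omega), Ico_add_one_right_eq_Icc]
  simp only [stirlingCoeff, stirling1_succ_zero, Int.cast_zero, mul_zero, zero_mul, zero_add,
    one_div]
end
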